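/- In the approximating scheme, for any $n\ge N+1$ one has $\mu_n\le\theta_n$, $\tau_n\le\tau_{n-N}$ and $\theta_n\le\theta_{n-N}$, $P$-a.s.; consequently, for each fixed $i\in\{1,\dots,N\}$ the sequence $(\tau_{Nn+i})_{n}$ is nonincreasing and the limits $T^*_i=\lim_n\tau_{Nn+i}$ exist $P$-a.s. -/

import Mathlib

open MeasureTheory Filter Topology

noncomputable section

/-- A real-valued process is RCLL: right-continuous with left limits. -/
def RCLL {Ω : Type*} (f : ℝ → Ω → ℝ) : Prop :=
  ∀ ω t, ContinuousWithinAt (fun s => f s ω) (Set.Ici t) t ∧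
    ∃ l : ℝ, Filter.Tendsto (fun s => f s ω) (nhdsWithin t (Set.Iio t)) (nhds l)

/-- Class [D]: the family of values at `[0,T]`-valued stopping times is uniformly
integrable. -/
def ClassD {Ω : Type*} {m : MeasurableSpace Ω} (F : Filtration ℝ m) (μ : Measure Ω)
    (T : ℝ) (f : ℝ → Ω → ℝ) : Prop :=
  UniformIntegrable
    (fun τ : {τ : Ω → ℝ // IsStoppingTime F (fun ω => (τ ω : WithTop ℝ)) ∧ ∀ ω, τ ω ∈ Set.Icc 0 T} =>
      fun ω => f (τ.1 ω) ω) 1 μ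

/-- The predictable jumps of `f` are only nonnegative: along any announcing sequence of
stopping times the limsup of the values does not exceed the value at the limit. -/
def NoNegPredictableJumps {Ω : Type*} {m : MeasurableSpace Ω} (F : Filtration ℝ m)
    (μ : Measure Ω) (f : ℝ → Ω → ℝ) : Prop :=
  ∀ σ : Ω → ℝ, IsStoppingTime F (fun ω => (σ ω : WithTop ℝ)) →
    ∀ σs : ℕ → Ω → ℝ, (∀ n, IsStoppingTime F (fun ω => (σs n ω : WithTop ℝ))) →
      (∀ ω, Monotone fun n => σs n ω) →
      (∀ ω, Tendsto (fun n => σs n ω) atTop (nhds (σ ω))) →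
      (∀ ω n, σs n ω < σ ω) →
      ∀ᵐ ω ∂μ, Filter.limsup (fun n => f (σs n ω) ω) atTop ≤ f (σ ω) ω

/-- `Z` has the Snell-envelope property for `U`: for each time `t`, `Z t` is (a.e.) the
essential supremum over stopping times `τ ∈ [t,T]` of `E[U_τ | F_t]`. -/
def IsSnell {Ω : Type*} {m : MeasurableSpace Ω} (F : Filtration ℝ m) (μ : Measure Ω)
    (T : ℝ) (U Z : ℝ → Ω → ℝ) : Prop :=
  ∀ t : ℝ,
    (∀ τ : Ω → ℝ, IsStoppingTime F (fun ω => (τ ω : WithTop ℝ)) → (∀ ω, τ ω ∈ Set.Icc t T) →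
      μ[(fun ω => U (τ ω) ω)|F t] ≤ᵐ[μ] Z t) ∧
    (∀ ξ : Ω → ℝ,
      (∀ τ : Ω → ℝ, IsStoppingTime F (fun ω => (τ ω : WithTop ℝ)) → (∀ ω, τ ω ∈ Set.Icc t T) →
        μ[(fun ω => U (τ ω) ω)|F t] ≤ᵐ[μ] ξ) → Z t ≤ᵐ[μ] ξ)

/-- Player index associated with the step `n = Nq + i`, `1 ≤ i ≤ N` (as an element of
`Fin N`, namely `i - 1`). -/
def idx (N : ℕ) (hN : 0 < N) (n : ℕ) : Fin N := ⟨(n - 1) % N, Nat.mod_lt _ hN⟩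

/-- The approximating scheme of the `N`-player nonzero-sum Dynkin game:
`τ_1 = ⋯ = τ_N = T`; for `n ≥ N+1` (with `n = Nq + i`, `1 ≤ i ≤ N`),
`θ_n = min (τ_{n-1}, …, τ_{n-N+1})`,
`U^n_t = X^i_t 1_{t < θ_n} + (Q^i_T 1_{θ_n = T} + Y^i_{θ_n} 1_{θ_n < T}) 1_{t ≥ θ_n}`,
`W^n` is the Snell envelope of `U^n`, `μ_n = inf {s ≥ 0 : W^n_s = U^n_s}` and
`τ_n = (μ_n ∧ τ_{n-N}) 1_{μ_n ∧ τ_{n-N} < θ_n} + τ_{n-N} 1_{μ_n ∧ τ_{n-N} ≥ θ_n}`. -/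
structure Scheme {Ω : Type*} {m : MeasurableSpace Ω} (F : Filtration ℝ m) (μ : Measure Ω)
    (N : ℕ) (hN : 0 < N) (T : ℝ) (X Q Y : Fin N → ℝ → Ω → ℝ)
    (tau theta muS : ℕ → Ω → ℝ) (U W : ℕ → ℝ → Ω → ℝ) : Prop where
  tau_init : ∀ n, n ≤ N → ∀ ω, tau n ω = T
  tau_st : ∀ n, IsStoppingTime F (fun ω => (tau n ω : WithTop ℝ))
  theta_def : ∀ n, 1 ≤ n → ∀ ω, theta n ω = ⨅ k : Fin (N - 1), tau (n - 1 - (k : ℕ)) ω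
  U_def : ∀ n, N + 1 ≤ n → ∀ t ω, U n t ω =
    if t < theta n ω then X (idx N hN n) t ω
    else if theta n ω = T then Q (idx N hN n) T ω else Y (idx N hN n) (theta n ω) ω
  W_snell : ∀ n, N + 1 ≤ n → IsSnell F μ T (U n) (W n)
  W_rcll : ∀ n, N + 1 ≤ n → RCLL (W n)
  mu_def : ∀ n, N + 1 ≤ n → ∀ ω, muS n ω = sInf {s : ℝ | 0 ≤ s ∧ W n s ω = U n s ω}
  mu_st : ∀ n, N + 1 ≤ n → IsStoppingTime F (fun ω => (muS n ω : WithTop ℝ))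
  tau_rec : ∀ n, N + 1 ≤ n → ∀ ω, tau n ω =
    if min (muS n ω) (tau (n - N) ω) < theta n ω then min (muS n ω) (tau (n - N) ω)
    else tau (n - N) ω

/-- Assumptions (A1)-(A3) of the nonzero-sum Dynkin game, together with progressive
measurability and class [D] of the data. -/
structure GameA {Ω : Type*} {m : MeasurableSpace Ω} (F : Filtration ℝ m) (μ : Measure Ω)
    {N : ℕ} (T : ℝ) (X Q Y : Fin N → ℝ → Ω → ℝ) : Prop where
  progX : ∀ i, ProgMeasurable F (X i)
  progQ : ∀ i, ProgMeasurable F (Q i)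
  progY : ∀ i, ProgMeasurable F (Y i)
  dX : ∀ i, ClassD F μ T (X i)
  dQ : ∀ i, ClassD F μ T (Q i)
  dY : ∀ i, ClassD F μ T (Y i)
  a1 : ∀ i, RCLL (X i) ∧ NoNegPredictableJumps F μ (X i)
  a2 : ∀ i ω t, ContinuousWithinAt (fun s => Y i s ω) (Set.Ici t) t
  a3 : ∀ i, ∀ᵐ ω ∂μ, ∀ t, t ≤ T → X i t ω ≤ Q i t ω ∧ Q i t ω ≤ Y i t ω

/-- Assumption (A4): for every stopping time `τ`, a.s.
`{Q^i_τ < Y^i_τ, τ < T} ⊆ ⋂_j {X^j_τ < Y^j_τ}`. -/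
def A4 {Ω : Type*} {m : MeasurableSpace Ω} (F : Filtration ℝ m) (μ : Measure Ω)
    {N : ℕ} (T : ℝ) (X Q Y : Fin N → ℝ → Ω → ℝ) : Prop :=
  ∀ τ : Ω → ℝ, IsStoppingTime F (fun ω => (τ ω : WithTop ℝ)) → (∀ ω, τ ω ∈ Set.Icc 0 T) →
    ∀ i : Fin N, ∀ᵐ ω ∂μ,
      (Q i (τ ω) ω < Y i (τ ω) ω ∧ τ ω < T) →
        ∀ j : Fin N, X j (τ ω) ω < Y j (τ ω) ω


/-!
The inequalities `τ_n ≤ τ_{n-N}` and `θ_n ≤ θ_{n-N}` hold pathwise: the first is read off the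
recursion for `τ_n`, the second follows since `θ_n` is the minimum of the `N - 1` preceding `τ`'s.
For `μ_n ≤ θ_n`: from `θ_n` on, the payoff `U^n` is frozen at a value that is
`F_t`-measurable on `{θ_n ≤ t}`, so there every stopping rule after `t` has the same conditional
payoff and the Snell envelope satisfies `W^n_t = U^n_t` a.s. Doing this simultaneously for all
rational `t` and for `t = T` puts points of `{W^n = U^n}` arbitrarily close to the right of `θ_n`.
Finally each `(τ_{Nq+i})_q` is nonincreasing and bounded below by `0`, hence convergent.
-/

section StoppingTimes

variable {Ω : Type*} {m : MeasurableSpace Ω} {F : Filtration ℝ m}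

lemma MeasureTheory.IsStoppingTime.measurableSet_le_real {τ : Ω → ℝ}
    (hτ : IsStoppingTime F fun ω => (τ ω : WithTop ℝ)) (t : ℝ) :
    MeasurableSet[F t] {ω | τ ω ≤ t} := by
  simpa only [WithTop.coe_le_coe] using hτ t

lemma MeasureTheory.IsStoppingTime.measurable_real {τ : Ω → ℝ}
    (hτ : IsStoppingTime F fun ω => (τ ω : WithTop ℝ)) : Measurable τ :=
  measurable_of_Iic fun s => F.le s _ (hτ.measurableSet_le_real s)

lemma isStoppingTime_ciInf {ι : Type*} [Finite ι] {f : ι → Ω → ℝ}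
    (hf : ∀ k, IsStoppingTime F fun ω => (f k ω : WithTop ℝ)) :
    IsStoppingTime F fun ω => ((⨅ k, f k ω : ℝ) : WithTop ℝ) := by
  rcases isEmpty_or_nonempty ι with hι | hι
  · simpa only [Real.iInf_of_isEmpty] using isStoppingTime_const F (0 : ℝ)
  intro s
  have hset : {ω | (⨅ k, f k ω) ≤ s} = ⋃ k, {ω | f k ω ≤ s} := by
    ext ω
    obtain ⟨k₀, hk₀⟩ := exists_eq_ciInf_of_finite (f := fun k => f k ω)
    simp only [Set.mem_ofPred_eq, Set.mem_iUnion]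
    exact ⟨fun h => ⟨k₀, hk₀ ▸ h⟩,
      fun ⟨k, hk⟩ => (ciInf_le (Set.finite_range _).bddBelow k).trans hk⟩
  simp only [WithTop.coe_le_coe]
  rw [hset]
  exact .iUnion fun k => (hf k).measurableSet_le_real s

lemma ClassD.integrable_apply {μ : Measure Ω} {T : ℝ} {f : ℝ → Ω → ℝ}
    (h : ClassD F μ T f) {τ : Ω → ℝ} (hτ : IsStoppingTime F fun ω => (τ ω : WithTop ℝ))
    (hτT : ∀ ω, τ ω ∈ Set.Icc 0 T) : Integrable (fun ω => f (τ ω) ω) μ := by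
  obtain ⟨hmeas, -, C, hC⟩ := h
  exact memLp_one_iff_integrable.mp
    ⟨hmeas ⟨τ, hτ, hτT⟩, (hC ⟨τ, hτ, hτT⟩).trans_lt ENNReal.coe_lt_top⟩

lemma MeasureTheory.IsStronglyProgressive.ite_eq_time {Q Y : ℝ → Ω → ℝ}
    (hQ : IsStronglyProgressive F Q) (hY : IsStronglyProgressive F Y) (T : ℝ) :
    IsStronglyProgressive F fun s ω => if s = T then Q T ω else Y s ω := by
  intro r
  by_cases hr : r < T
  · convert hY r using 2 with p
    exact if_neg (p.1.2.trans_lt hr).ne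
  · have hQT : StronglyMeasurable[F r] (Q T) :=
      (hQ.stronglyAdapted T).mono (F.mono (not_lt.mp hr))
    have hTset : MeasurableSet[Subtype.instMeasurableSpace.prod (F r)]
        {p : Set.Iic r × Ω | (p.1 : ℝ) = T} :=
      (measurable_subtype_coe.comp measurable_fst) (measurableSet_singleton T)
    exact StronglyMeasurable.ite hTset (hQT.comp_measurable measurable_snd) (hY r)

lemma MeasureTheory.IsStronglyProgressive.stronglyMeasurable_indicator_apply_le {V : ℝ → Ω → ℝ}
    (hV : IsStronglyProgressive F V) {θ : Ω → ℝ}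
    (hθ : IsStoppingTime F fun ω => (θ ω : WithTop ℝ)) (t : ℝ) :
    StronglyMeasurable[F t] ({ω | θ ω ≤ t}.indicator fun ω => V (θ ω) ω) := by
  have hmin : IsStoppingTime F fun ω => ((min (θ ω) t : ℝ) : WithTop ℝ) := by
    simpa only [WithTop.coe_min] using hθ.min_const t
  convert (stronglyMeasurable_stoppedValue_of_le hV hmin fun ω =>
    WithTop.coe_le_coe.mpr (min_le_right _ _)).indicator (hθ.measurableSet_le_real t) using 1
  refine Set.indicator_congr fun ω hω => ?_
  show V (θ ω) ω = V (min (θ ω) t) ω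
  rw [min_eq_left (show θ ω ≤ t from hω)]

end StoppingTimes

section Snell

variable {Ω : Type*} {m : MeasurableSpace Ω} {F : Filtration ℝ m} {μ : Measure Ω}
  [IsFiniteMeasure μ] {T t : ℝ} {U Z : ℝ → Ω → ℝ}

lemma IsSnell.ae_eq_of_eqOn {A : Set Ω} (hA : MeasurableSet[F t] A) {g : Ω → ℝ}
    (hZ : IsSnell F μ T U Z) (htT : t ≤ T)
    (hg : StronglyMeasurable[F t] (A.indicator g))
    (hU : ∀ τ : Ω → ℝ, IsStoppingTime F (fun ω => (τ ω : WithTop ℝ)) →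
      (∀ ω, τ ω ∈ Set.Icc t T) → Integrable (fun ω => U (τ ω) ω) μ)
    (hUA : ∀ s, t ≤ s → ∀ ω ∈ A, U s ω = g ω) :
    ∀ᵐ ω ∂μ, ω ∈ A → Z t ω = g ω := by
  classical
  have hconst : IsStoppingTime F fun _ : Ω => (t : WithTop ℝ) := isStoppingTime_const F t
  have hconst_mem : ∀ _ : Ω, t ∈ Set.Icc t T := fun _ => ⟨le_rfl, htT⟩
  have hgi : Integrable (A.indicator g) μ := by
    have h := (hU _ hconst hconst_mem).indicator (F.le t _ hA)
    rwa [Set.indicator_congr fun ω hω => hUA t le_rfl ω hω] at h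
  have hcond : ∀ τ : Ω → ℝ, IsStoppingTime F (fun ω => (τ ω : WithTop ℝ)) →
      (∀ ω, τ ω ∈ Set.Icc t T) →
      ∀ᵐ ω ∂μ, ω ∈ A → μ[(fun ω => U (τ ω) ω)|F t] ω = g ω := by
    intro τ hτ hτt
    have hUg : A.indicator (fun ω => U (τ ω) ω) = A.indicator g :=
      Set.indicator_congr fun ω hω => hUA _ (hτt ω).1 ω hω
    have h := (condExp_indicator (hU τ hτ hτt) hA).symm
    rw [hUg, condExp_of_stronglyMeasurable (F.le t) hg hgi] at h
    filter_upwards [h] with ω hω hωA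
    simpa only [Set.indicator_of_mem hωA] using hω
  obtain ⟨hup, hlow⟩ := hZ t
  have hge : ∀ᵐ ω ∂μ, ω ∈ A → g ω ≤ Z t ω := by
    filter_upwards [hcond _ hconst hconst_mem, hup _ hconst hconst_mem] with ω h₁ h₂ hω
    exact h₁ hω ▸ h₂
  have hle : Z t ≤ᵐ[μ] A.piecewise g (Z t) := by
    refine hlow _ fun τ hτ hτt => ?_
    filter_upwards [hcond τ hτ hτt, hup τ hτ hτt] with ω h₁ h₂
    by_cases hω : ω ∈ A
    · simp only [Set.piecewise_eq_of_mem _ _ _ hω, h₁ hω, le_rfl]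
    · simpa only [Set.piecewise_eq_of_notMem _ _ _ hω] using h₂
  filter_upwards [hge, hle] with ω h₁ h₂ hω
  exact le_antisymm (by simpa only [Set.piecewise_eq_of_mem _ _ _ hω] using h₂) (h₁ hω)

lemma IsSnell.ae_eq_of_frozen {X Q Y : ℝ → Ω → ℝ} (hQ : IsStronglyProgressive F Q)
    (hY : IsStronglyProgressive F Y) (hXD : ClassD F μ T X) (hQD : ClassD F μ T Q)
    (hYD : ClassD F μ T Y) {θ : Ω → ℝ}
    (hθ : IsStoppingTime F fun ω => (θ ω : WithTop ℝ)) (hθT : ∀ ω, θ ω ∈ Set.Icc 0 T)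
    (hU : ∀ s ω, U s ω = if s < θ ω then X s ω else if θ ω = T then Q T ω else Y (θ ω) ω)
    (hZ : IsSnell F μ T U Z) (ht0 : 0 ≤ t) (htT : t ≤ T) :
    ∀ᵐ ω ∂μ, θ ω ≤ t → Z t ω = U t ω := by
  set V : ℝ → Ω → ℝ := fun s ω => if s = T then Q T ω else Y s ω
  have hV : IsStronglyProgressive F V := hQ.ite_eq_time hY T
  have hQT : Integrable (Q T) μ :=
    hQD.integrable_apply (isStoppingTime_const F T) fun _ => ⟨ht0.trans htT, le_rfl⟩
  have hVθ : Integrable (fun ω => V (θ ω) ω) μ :=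
    .piecewise (s := {ω | θ ω = T}) (measurableSet_eq_fun hθ.measurable_real measurable_const)
      hQT.integrableOn (hYD.integrable_apply hθ hθT).integrableOn
  have hUτ : ∀ τ : Ω → ℝ, IsStoppingTime F (fun ω => (τ ω : WithTop ℝ)) →
      (∀ ω, τ ω ∈ Set.Icc t T) → Integrable (fun ω => U (τ ω) ω) μ := by
    intro τ hτ hτt
    simp only [hU]
    exact .piecewise (s := {ω | τ ω < θ ω}) (measurableSet_lt hτ.measurable_real hθ.measurable_real)
      (hXD.integrable_apply hτ fun ω => ⟨ht0.trans (hτt ω).1, (hτt ω).2⟩).integrableOn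
      hVθ.integrableOn
  have hA := hZ.ae_eq_of_eqOn (hθ.measurableSet_le_real t) htT
    (hV.stronglyMeasurable_indicator_apply_le hθ t) hUτ
    fun s hs ω hω => (hU s ω).trans (if_neg (not_lt.mpr (le_trans hω hs)))
  filter_upwards [hA] with ω hω hθt
  rw [hω hθt, hU, if_neg (not_lt.mpr hθt)]

end Snell

lemma csInf_le_of_forall_rat {P : ℝ → Prop} {θ T : ℝ} (hθ : 0 ≤ θ) (hθT : θ ≤ T)
    (hP : ∀ q : ℚ, θ ≤ q → (q : ℝ) ≤ T → P q) (hPT : P T) :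
    sInf {s | 0 ≤ s ∧ P s} ≤ θ := by
  have hbdd : BddBelow {s : ℝ | 0 ≤ s ∧ P s} := ⟨0, fun _ hs => hs.1⟩
  refine le_of_forall_gt_imp_ge_of_dense fun c hc => ?_
  by_cases hcT : T < c
  · exact (csInf_le hbdd ⟨hθ.trans hθT, hPT⟩).trans hcT.le
  · obtain ⟨q, hθq, hqc⟩ := exists_rat_btwn hc
    have hqT : (q : ℝ) ≤ T := hqc.le.trans (not_lt.mp hcT)
    exact (csInf_le hbdd ⟨hθ.trans hθq.le, hP q hθq.le hqT⟩).trans hqc.le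

namespace Scheme

variable {Ω : Type*} {m : MeasurableSpace Ω} {F : Filtration ℝ m} {μ : Measure Ω} {N : ℕ}
  {hN : 0 < N} {T : ℝ} {X Q Y : Fin N → ℝ → Ω → ℝ} {tau theta muS : ℕ → Ω → ℝ}
  {U W : ℕ → ℝ → Ω → ℝ}

lemma tau_le_tau_sub (S : Scheme F μ N hN T X Q Y tau theta muS U W) {n : ℕ} (hn : N + 1 ≤ n)
    (ω : Ω) : tau n ω ≤ tau (n - N) ω := by
  rw [S.tau_rec n hn ω]
  split_ifs
  exacts [min_le_right _ _, le_rfl]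

lemma tau_mem_Icc (S : Scheme F μ N hN T X Q Y tau theta muS U W) (hT : 0 ≤ T) (n : ℕ)
    (ω : Ω) : tau n ω ∈ Set.Icc 0 T := by
  induction n using Nat.strong_induction_on with
  | _ n ih =>
    rcases le_or_gt n N with hn | hn
    · rw [S.tau_init n hn ω]
      exact ⟨hT, le_rfl⟩
    have hprev := ih (n - N) (by omega)
    have hmu : 0 ≤ muS n ω := by
      rw [S.mu_def n hn ω]
      exact Real.sInf_nonneg fun _ hs => hs.1
    refine ⟨?_, (S.tau_le_tau_sub hn ω).trans hprev.2⟩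
    rw [S.tau_rec n hn ω]
    split_ifs
    exacts [le_min hmu hprev.1, hprev.1]

lemma theta_mem_Icc (S : Scheme F μ N hN T X Q Y tau theta muS U W) (hT : 0 ≤ T) {n : ℕ}
    (hn : 1 ≤ n) (ω : Ω) : theta n ω ∈ Set.Icc 0 T := by
  rw [S.theta_def n hn ω]
  refine ⟨Real.iInf_nonneg fun k => (S.tau_mem_Icc hT _ ω).1, ?_⟩
  rcases isEmpty_or_nonempty (Fin (N - 1)) with hι | hι
  · rwa [Real.iInf_of_isEmpty]
  · exact ciInf_le_of_le (Set.finite_range _).bddBelow (Classical.arbitrary _)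
      (S.tau_mem_Icc hT _ ω).2

lemma theta_le_theta_sub (S : Scheme F μ N hN T X Q Y tau theta muS U W) {n : ℕ}
    (hn : N + 1 ≤ n) (ω : Ω) : theta n ω ≤ theta (n - N) ω := by
  rw [S.theta_def n (by omega) ω, S.theta_def (n - N) (by omega) ω]
  refine ciInf_mono (Set.finite_range _).bddBelow fun k => ?_
  by_cases hk : n - 1 - (k : ℕ) ≤ N
  · rw [S.tau_init _ hk ω, S.tau_init _ (by omega) ω]
  · have h := S.tau_le_tau_sub (n := n - 1 - (k : ℕ)) (by omega) ω
    rwa [show n - 1 - (k : ℕ) - N = n - N - 1 - (k : ℕ) by omega] at h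

lemma isStoppingTime_theta (S : Scheme F μ N hN T X Q Y tau theta muS U W) {n : ℕ}
    (hn : 1 ≤ n) : IsStoppingTime F fun ω => (theta n ω : WithTop ℝ) := by
  rw [funext (S.theta_def n hn)]
  exact isStoppingTime_ciInf fun k => S.tau_st _

lemma muS_le_theta [IsFiniteMeasure μ] (S : Scheme F μ N hN T X Q Y tau theta muS U W)
    (hT : 0 ≤ T) (hA : GameA F μ T X Q Y) {n : ℕ} (hn : N + 1 ≤ n) :
    ∀ᵐ ω ∂μ, muS n ω ≤ theta n ω := by
  have hθ := S.theta_mem_Icc hT (n := n) (by omega)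
  have hfrozen : ∀ t, 0 ≤ t → t ≤ T → ∀ᵐ ω ∂μ, theta n ω ≤ t → W n t ω = U n t ω :=
    fun t ht0 htT => (S.W_snell n hn).ae_eq_of_frozen (hA.progQ _) (hA.progY _) (hA.dX _)
      (hA.dQ _) (hA.dY _) (S.isStoppingTime_theta (by omega)) hθ (S.U_def n hn) ht0 htT
  have hrat : ∀ᵐ ω ∂μ, ∀ q : ℚ, theta n ω ≤ q → (q : ℝ) ≤ T → W n q ω = U n q ω := by
    refine ae_all_iff.mpr fun q => ?_
    by_cases hq : 0 ≤ (q : ℝ) ∧ (q : ℝ) ≤ T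
    · filter_upwards [hfrozen q hq.1 hq.2] with ω h hθq _ using h hθq
    · exact .of_forall fun ω hθq hqT => absurd ⟨(hθ ω).1.trans hθq, hqT⟩ hq
  filter_upwards [hrat, hfrozen T hT le_rfl] with ω hq hqT
  rw [S.mu_def n hn ω]
  exact csInf_le_of_forall_rat (hθ ω).1 (hθ ω).2 hq (hqT (hθ ω).2)

lemma antitone_tau (S : Scheme F μ N hN T X Q Y tau theta muS U W) {i : ℕ} (hi : 1 ≤ i)
    (ω : Ω) : Antitone fun q => tau (N * q + i) ω := by
  refine antitone_nat_of_succ_le fun q => ?_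
  have h := S.tau_le_tau_sub (n := N * (q + 1) + i) (by nlinarith) ω
  rwa [show N * (q + 1) + i - N = N * q + i by rw [Nat.mul_succ]; omega] at h

end Scheme

theorem stmt8_general {Ω : Type*} {m : MeasurableSpace Ω} (μ : Measure Ω) [IsProbabilityMeasure μ]
    (F : Filtration ℝ m) (N : ℕ) (hN : 0 < N) (T : ℝ) (hT : 0 ≤ T)
    (X Q Y : Fin N → ℝ → Ω → ℝ) (hA : GameA F μ T X Q Y)
    (tau theta muS : ℕ → Ω → ℝ) (U W : ℕ → ℝ → Ω → ℝ)
    (S : Scheme F μ N hN T X Q Y tau theta muS U W) :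
    (∀ n, N + 1 ≤ n → ∀ᵐ ω ∂μ,
      muS n ω ≤ theta n ω ∧ tau n ω ≤ tau (n - N) ω ∧ theta n ω ≤ theta (n - N) ω) ∧
    ∀ i, 1 ≤ i → i ≤ N → ∀ᵐ ω ∂μ,
      Antitone (fun q => tau (N * q + i) ω) ∧
      ∃ L : ℝ, Tendsto (fun q => tau (N * q + i) ω) atTop (nhds L) := by
  refine ⟨fun n hn => ?_, fun i hi _ => .of_forall fun ω => ?_⟩
  · filter_upwards [S.muS_le_theta hT hA hn] with ω hμθ
    exact ⟨hμθ, S.tau_le_tau_sub hn ω, S.theta_le_theta_sub hn ω⟩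
  · have hanti := S.antitone_tau hi ω
    refine ⟨hanti, _, tendsto_atTop_ciInf hanti ⟨0, ?_⟩⟩
    rintro _ ⟨q, rfl⟩
    exact (S.tau_mem_Icc hT _ ω).1

/-- monotonicity of the scheme: `μ_n ≤ θ_n`, `τ_n ≤ τ_{n-N}`,
`θ_n ≤ θ_{n-N}` for `n ≥ N+1`; consequently each `(τ_{Nq+i})_q` is nonincreasing and
converges a.s. -/
theorem stmt8 {Ω : Type*} {m : MeasurableSpace Ω} (μ : Measure Ω) [IsProbabilityMeasure μ]
    (F : Filtration ℝ m) (N : ℕ) (hN3 : 3 ≤ N) (hN : 0 < N) (T : ℝ) (hT : 0 ≤ T)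
    (X Q Y : Fin N → ℝ → Ω → ℝ) (hA : GameA F μ T X Q Y)
    (tau theta muS : ℕ → Ω → ℝ) (U W : ℕ → ℝ → Ω → ℝ)
    (S : Scheme F μ N hN T X Q Y tau theta muS U W) :
    (∀ n, N + 1 ≤ n → ∀ᵐ ω ∂μ,
      muS n ω ≤ theta n ω ∧ tau n ω ≤ tau (n - N) ω ∧ theta n ω ≤ theta (n - N) ω) ∧
    ∀ i, 1 ≤ i → i ≤ N → ∀ᵐ ω ∂μ,
      Antitone (fun q => tau (N * q + i) ω) ∧
      ∃ L : ℝ, Tendsto (fun q => tau (N * q + i) ω) atTop (nhds L) :=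
  stmt8_general μ F N hN T hT X Q Y hA tau theta muS U W S
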